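/- Let SU(2) act on a manifold M preserving a 2-form ω and a function-valued setup as follows: let K¹,K²,K³ be the fundamental vector fields of a basis ξ₁,ξ₂,ξ₃ of 𝔰𝔲(2) with [ξᵢ,ξⱼ] = −ε_{ijk} ξ_k, define μ = (ω(K²,K³), ω(K³,K¹), ω(K¹,K²)) and ν = Im ψ(K¹,K²,K³) on a nearly Kähler 6-manifold. If at a point x one has ν(x) ≠ 0 and μ(x) = 0, then the SU(2)-orbit through x is a 3-dimensional special Lagrangian submanifold; conversely every 3-dimensional SU(2)-orbit that is special Lagrangian satisfies μ = 0 and ν ≠ 0 along it. -/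

import Mathlib

/-!
Write `A = Adm g`. Invariance of the `Kⁱ` says that the differential of `g` sends the frame
`K(x)` to `Aᵀ K(g • x)`, and orthogonality of `A` inverts this: `K(g • x)` is the frame
`A · dact g x (K(x))`. Hence `ω` vanishes on the `Kⁱ` at `g • x` because it vanishes on the
transported frame, and `Im ψ (K(g • x))` differs from `Im ψ (K(x))` by the factor `det A`, so it
is non-zero; a non-vanishing 3-form forces the `Kⁱ` to be linearly independent.
-/

open Matrix

theorem MultilinearMap.map_sum_smul_eq_zero {R M N ι κ : Type*} [CommSemiring R]
    [AddCommMonoid M] [Module R M] [AddCommMonoid N] [Module R N] [Fintype ι] [DecidableEq ι]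
    [Fintype κ] (f : MultilinearMap R (fun _ : ι => M) N) (w : κ → M)
    (hf : ∀ r : ι → κ, f (w ∘ r) = 0) (c : ι → κ → R) :
    f (fun i => ∑ k, c i k • w k) = 0 := by
  rw [f.map_sum]
  refine Finset.sum_eq_zero fun r _ => ?_
  rw [f.map_smul_univ]
  exact (congrArg _ (hf r)).trans (smul_zero _)

theorem AlternatingMap.map_sum_smul_eq_det_smul {R M ι : Type*} [CommRing R] [AddCommGroup M]
    [Module R M] [Fintype ι] [DecidableEq ι]
    (f : M [⋀^ι]→ₗ[R] R) (A : Matrix ι ι R) (w : ι → M) :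
    f (fun i => ∑ j, A i j • w j) = A.det • f w := by
  set g := f.compLinearMap (Fintype.linearCombination R w)
  have hbasis : g (Pi.basisFun R ι) = f w := by
    simp [g, Fintype.linearCombination_apply, Pi.single_apply]
  change g (fun i => A i) = _
  rw [g.eq_smul_basis_det (Pi.basisFun R ι), hbasis, AlternatingMap.smul_apply, smul_eq_mul,
    Module.Basis.det_apply, mul_comm, ← det_transpose A]
  rfl

theorem Matrix.sum_smul_sum_smul_of_mul_transpose_eq_one {R M ι : Type*} [CommSemiring R]
    [AddCommMonoid M] [Module R M] [Fintype ι] [DecidableEq ι] {A : Matrix ι ι R}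
    (hA : A * Aᵀ = 1) (w : ι → M) (i : ι) :
    ∑ a, A i a • ∑ j, A j a • w j = w i := by
  simp_rw [Finset.smul_sum, smul_smul]
  rw [Finset.sum_comm]
  simp_rw [← Finset.sum_smul]
  have hrow : ∀ j, ∑ a, A i a * A j a = (1 : Matrix ι ι R) i j := fun j => by
    rw [← hA, mul_apply]
    rfl
  simp [hrow, one_apply]

theorem stmt_12 {M : Type*} [MulAction (Matrix.specialUnitaryGroup (Fin 2) ℂ) M]
    (E : M → Type*) [∀ x, AddCommGroup (E x)] [∀ x, Module ℝ (E x)]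
    (ω : ∀ x, AlternatingMap ℝ (E x) ℝ (Fin 2))
    (Imψ : ∀ x, AlternatingMap ℝ (E x) ℝ (Fin 3))
    (K : Fin 3 → ∀ x, E x)
    (dact : ∀ (g : Matrix.specialUnitaryGroup (Fin 2) ℂ) (x : M), E x ≃ₗ[ℝ] E (g • x))
    (Adm : Matrix.specialUnitaryGroup (Fin 2) ℂ → Matrix (Fin 3) (Fin 3) ℝ)
    (hAd : ∀ g, Adm g * (Adm g)ᵀ = 1)
    (hK : ∀ g x i, dact g x (K i x) = ∑ j, Adm g j i • K j (g • x))
    (hω : ∀ g x u v, ω (g • x) ![dact g x u, dact g x v] = ω x ![u, v])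
    (hImψ : ∀ g x u v w,
      Imψ (g • x) ![dact g x u, dact g x v, dact g x w] = Imψ x ![u, v, w])
    (x : M) :
    (Imψ x ![K 0 x, K 1 x, K 2 x] ≠ 0 ∧ ∀ i j, ω x ![K i x, K j x] = 0) ↔
      ∀ y ∈ MulAction.orbit (Matrix.specialUnitaryGroup (Fin 2) ℂ) x,
        (LinearIndependent ℝ fun i => K i y) ∧ (∀ i j, ω y ![K i y, K j y] = 0) ∧
          Imψ y ![K 0 y, K 1 y, K 2 y] ≠ 0 := by
  refine ⟨?_, fun h => let ⟨_, hμ, hν⟩ := h x (MulAction.mem_orbit_self x); ⟨hν, hμ⟩⟩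
  rintro ⟨hν, hμ⟩ _ ⟨g, rfl⟩
  set v := fun i => dact g x (K i x)
  have hK_eq : ∀ i, K i (g • x) = ∑ a, Adm g i a • v a := fun i => by
    simp only [v, hK]
    exact (sum_smul_sum_smul_of_mul_transpose_eq_one (hAd g) (fun j => K j (g • x)) i).symm
  have hν_eq : Imψ x ![K 0 x, K 1 x, K 2 x] = (Adm g).det • Imψ (g • x) fun i => K i (g • x) := by
    rw [← hImψ g, ← det_transpose, ← AlternatingMap.map_sum_smul_eq_det_smul]
    exact congrArg _ ((FinVec.etaExpand_eq v).trans (funext fun i => hK g x i))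
  have hνy : Imψ (g • x) (fun i => K i (g • x)) ≠ 0 := fun h0 =>
    hν (by rw [hν_eq, h0, smul_zero])
  have hμy : ∀ i j, ω (g • x) ![K i (g • x), K j (g • x)] = 0 := fun i j => by
    have hpair : ![K i (g • x), K j (g • x)] = fun s => ∑ a, Adm g (![i, j] s) a • v a :=
      (FinVec.etaExpand_eq fun s => K (![i, j] s) (g • x)).trans (funext fun s => hK_eq _)
    rw [hpair]
    refine (ω (g • x)).toMultilinearMap.map_sum_smul_eq_zero v (fun r => ?_) _
    exact ((congrArg _ (FinVec.etaExpand_eq (v ∘ r)).symm).trans (hω g x _ _)).trans (hμ _ _)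
  exact ⟨by_contra fun hdep => hνy ((Imψ (g • x)).map_linearDependent _ hdep), hμy,
    by rwa [← FinVec.etaExpand_eq fun i => K i (g • x)] at hνy⟩
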